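/- arXiv:2601.18455 — 6 statements merged into one kernel-verified Lean document; each statement's English description precedes it below -/
import Mathlib

section
/- For a 3-uniform hypergraph H on n ≥ 5 vertices that is Berge-K4-saturated, if u,v are vertices such that adding the pair {u,v} as a required edge creates a new Berge-K4 (i.e., (u,v) is a good pair), then the number of hyperedges of H containing both u and v is at most 2. -/
/-!
A third hyperedge through `u` and `v` would contain neither `x` nor `y`, the other two core
vertices witnessing that `(u, v)` is good: by 3-uniformity, a hyperedge through `u`, `v` and `x`
is `{u, v, x}`. So it differs from the five hyperedges of the good pair, and it supplies the
missing sixth edge `uv` of a Berge-K4 in `E` itself.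
-/

variable {V : Type*} [DecidableEq V]

/-- A Berge-K4 in the hyperedge set `E` with core vertices `a,b,c,d`:
four distinct vertices together with six distinct hyperedges, one assigned
to each pair of core vertices, each containing its assigned pair. -/
def IsBergeK4Core (E : Finset (Finset V)) (a b c d : V) : Prop :=
  a ≠ b ∧ a ≠ c ∧ a ≠ d ∧ b ≠ c ∧ b ≠ d ∧ c ≠ d ∧
  ∃ fab fac fad fbc fbd fcd : Finset V,
    fab ∈ E ∧ fac ∈ E ∧ fad ∈ E ∧ fbc ∈ E ∧ fbd ∈ E ∧ fcd ∈ E ∧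
    ([fab, fac, fad, fbc, fbd, fcd] : List (Finset V)).Nodup ∧
    a ∈ fab ∧ b ∈ fab ∧ a ∈ fac ∧ c ∈ fac ∧ a ∈ fad ∧ d ∈ fad ∧
    b ∈ fbc ∧ c ∈ fbc ∧ b ∈ fbd ∧ d ∈ fbd ∧ c ∈ fcd ∧ d ∈ fcd

/-- `E` contains a Berge-K4. -/
def IsBergeK4 (E : Finset (Finset V)) : Prop :=
  ∃ a b c d : V, IsBergeK4Core E a b c d

/-- Every hyperedge has exactly 3 vertices. -/
def Is3Uniform (E : Finset (Finset V)) : Prop := ∀ e ∈ E, e.card = 3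

/-- The degree of a vertex: the number of hyperedges containing it. -/
def hdeg (E : Finset (Finset V)) (v : V) : ℕ := (E.filter fun e => v ∈ e).card

/-- A 3-uniform Berge-K4-saturated hypergraph on the (finite) vertex type `V`:
it is 3-uniform, Berge-K4-free, and adding any non-hyperedge (3-element subset
of the vertices not already a hyperedge) creates a Berge-K4. -/
def IsSaturated [Fintype V] (E : Finset (Finset V)) : Prop :=
  Is3Uniform E ∧ ¬ IsBergeK4 E ∧
    ∀ e : Finset V, e.card = 3 → e ∉ E → IsBergeK4 (insert e E)

/-- The pair `(u,v)` is good: there are two further vertices `x,y` (so that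
`u,v,x,y` are four distinct vertices) and five distinct hyperedges, one for
each pair among `u,v,x,y` other than `uv`, each containing its assigned pair;
i.e. adding an edge on `{u,v}` completes a Berge-K4 with core `{u,v,x,y}`. -/
def GoodPair (E : Finset (Finset V)) (u v : V) : Prop :=
  ∃ x y : V, u ≠ v ∧ u ≠ x ∧ u ≠ y ∧ v ≠ x ∧ v ≠ y ∧ x ≠ y ∧
  ∃ eux euy evx evy exy : Finset V,
    eux ∈ E ∧ euy ∈ E ∧ evx ∈ E ∧ evy ∈ E ∧ exy ∈ E ∧
    ([eux, euy, evx, evy, exy] : List (Finset V)).Nodup ∧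
    u ∈ eux ∧ x ∈ eux ∧ u ∈ euy ∧ y ∈ euy ∧
    v ∈ evx ∧ x ∈ evx ∧ v ∈ evy ∧ y ∈ evy ∧
    x ∈ exy ∧ y ∈ exy

theorem Finset.eq_of_card_eq_three_of_mem {f : Finset V} {u v w : V} (hf : f.card = 3)
    (huv : u ≠ v) (huw : u ≠ w) (hvw : v ≠ w) (hu : u ∈ f) (hv : v ∈ f) (hw : w ∈ f) :
    f = {u, v, w} := by
  have hsub : ({u, v, w} : Finset V) ⊆ f := by
    simp only [Finset.insert_subset_iff, Finset.singleton_subset_iff]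
    exact ⟨hu, hv, hw⟩
  refine (Finset.eq_of_subset_of_card_le hsub ?_).symm
  rw [hf, Finset.card_eq_three.2 ⟨u, v, w, huv, huw, hvw, rfl⟩]

theorem GoodPair.filter_mem_subset {E : Finset (Finset V)} {u v : V} (h3 : Is3Uniform E)
    (hfree : ¬ IsBergeK4 E) (hgood : GoodPair E u v) :
    ∃ x y : V, E.filter (fun e => u ∈ e ∧ v ∈ e) ⊆ {{u, v, x}, {u, v, y}} := by
  obtain ⟨x, y, huv, hux, huy, hvx, hvy, hxy, eux, euy, evx, evy, exy,
    heux, heuy, hevx, hevy, hexy, hnd, hu_ux, hx_ux, hu_uy, hy_uy, hv_vx, hx_vx, hv_vy, hy_vy,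
    hx_xy, hy_xy⟩ := hgood
  refine ⟨x, y, fun f hf => ?_⟩
  by_contra hfout
  obtain ⟨hfE, huf, hvf⟩ := Finset.mem_filter.1 hf
  have hxf : x ∉ f := fun hx =>
    hfout (by simp [Finset.eq_of_card_eq_three_of_mem (h3 f hfE) huv hux hvx huf hvf hx])
  have hyf : y ∉ f := fun hy =>
    hfout (by simp [Finset.eq_of_card_eq_three_of_mem (h3 f hfE) huv huy hvy huf hvf hy])
  have hfnew : f ∉ [eux, euy, evx, evy, exy] := by
    simp only [List.mem_cons, List.not_mem_nil, or_false]
    rintro (rfl | rfl | rfl | rfl | rfl)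
    exacts [hxf hx_ux, hyf hy_uy, hxf hx_vx, hyf hy_vy, hxf hx_xy]
  exact hfree ⟨u, v, x, y, huv, hux, huy, hvx, hvy, hxy,
    f, eux, euy, evx, evy, exy, hfE, heux, heuy, hevx, hevy, hexy,
    List.nodup_cons.2 ⟨hfnew, hnd⟩,
    huf, hvf, hu_ux, hx_ux, hu_uy, hy_uy, hv_vx, hx_vx, hv_vy, hy_vy, hx_xy, hy_xy⟩

theorem stmt_0_general (n : ℕ) (E : Finset (Finset (Fin n)))
    (hsat : IsSaturated E) (u v : Fin n) (hgood : GoodPair E u v) :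
    (E.filter fun e => u ∈ e ∧ v ∈ e).card ≤ 2 := by
  obtain ⟨h3, hfree, -⟩ := hsat
  obtain ⟨x, y, hsub⟩ := hgood.filter_mem_subset h3 hfree
  exact (Finset.card_le_card hsub).trans Finset.card_le_two

theorem stmt_0 (n : ℕ) (hn : 5 ≤ n) (E : Finset (Finset (Fin n)))
    (hsat : IsSaturated E) (u v : Fin n) (hgood : GoodPair E u v) :
    (E.filter fun e => u ∈ e ∧ v ∈ e).card ≤ 2 :=
  stmt_0_general n E hsat u v hgood
end

section
/- For a 3-uniform hypergraph H on n ≥ 5 vertices that is Berge-K4-saturated, if (u,v) is a good pair, then every vertex w such that {u,v,w} is a hyperedge of H has degree at least 3 in H. -/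
variable {V : Type*} [DecidableEq V]

theorem length_le_hdeg {E : Finset (Finset V)} {w : V} {l : List (Finset V)} (hl : l.Nodup)
    (hE : ∀ e ∈ l, e ∈ E ∧ w ∈ e) : l.length ≤ hdeg E w := by
  rw [← List.toFinset_card_of_nodup hl]
  exact Finset.card_le_card fun e he ↦ Finset.mem_filter.2 (hE e (List.mem_toFinset.1 he))

theorem GoodPair.three_le_hdeg {E : Finset (Finset V)} {u v w : V} (hfree : ¬ IsBergeK4 E)
    (hgood : GoodPair E u v) (hw : ({u, v, w} : Finset V) ∈ E) : 3 ≤ hdeg E w := by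
  obtain ⟨x, y, huv, hux, huy, hvx, hvy, hxy, eux, euy, evx, evy, exy,
    heux, heuy, hevx, hevy, hexy, hnd, hu_ux, hx_ux, hu_uy, hy_uy,
    hv_vx, hx_vx, hv_vy, hy_vy, hx_xy, hy_xy⟩ := hgood
  -- otherwise `{u, v, w}` serves as the sixth hyperedge, on the pair `uv`
  have hf : ({u, v, w} : Finset V) ∈ [eux, euy, evx, evy, exy] := by
    by_contra hf
    exact hfree ⟨u, v, x, y, huv, hux, huy, hvx, hvy, hxy, _, eux, euy, evx, evy, exy,
      hw, heux, heuy, hevx, hevy, hexy, List.nodup_cons.2 ⟨hf, hnd⟩, by simp, by simp,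
      hu_ux, hx_ux, hu_uy, hy_uy, hv_vx, hx_vx, hv_vy, hy_vy, hx_xy, hy_xy⟩
  have hxy_mem : x ∈ ({u, v, w} : Finset V) ∨ y ∈ ({u, v, w} : Finset V) := by
    simp only [List.mem_cons, List.not_mem_nil, or_false] at hf
    rcases hf with hf | hf | hf | hf | hf <;> rw [hf] <;> simp [*]
  rcases hxy_mem with hx | hy
  · obtain rfl : x = w := by simpa [hux.symm, hvx.symm] using hx
    refine length_le_hdeg (l := [eux, evx, exy]) (hnd.sublist (by simp)) ?_
    simp [*]
  · obtain rfl : y = w := by simpa [huy.symm, hvy.symm] using hy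
    refine length_le_hdeg (l := [euy, evy, exy]) (hnd.sublist (by simp)) ?_
    simp [*]

theorem stmt_1_general (n : ℕ) (E : Finset (Finset (Fin n)))
    (hsat : IsSaturated E) (u v : Fin n) (hgood : GoodPair E u v) :
    ∀ w : Fin n, ({u, v, w} : Finset (Fin n)) ∈ E → 3 ≤ hdeg E w :=
  fun _ hw ↦ hgood.three_le_hdeg hsat.2.1 hw

theorem stmt_1 (n : ℕ) (hn : 5 ≤ n) (E : Finset (Finset (Fin n)))
    (hsat : IsSaturated E) (u v : Fin n) (hgood : GoodPair E u v) :
    ∀ w : Fin n, ({u, v, w} : Finset (Fin n)) ∈ E → 3 ≤ hdeg E w :=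
  stmt_1_general n E hsat u v hgood
end

section
/- Let H be a Berge-K4-free 3-uniform hypergraph with a hyperedge {v1,v2,v3} where d(v1) ≤ 2 and d(v2) ≤ 2. Then v1 and v2 cannot simultaneously lie in the core of any Berge-K4 that arises upon adding a single new hyperedge; in particular, all three pairs (v1,v2), (v1,v3), (v2,v3) are bad. -/
variable {V : Type*} [DecidableEq V]

/-!
If `d(v₁), d(v₂) ≤ 2` and `{v₁, v₂, v₃}` is a hyperedge, then that hyperedge is one of the at most
two hyperedges at `v₁` and one of those at `v₂`. A good pair `(v₁, v₂)` would supply two hyperedges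
at each of them, four distinct ones in all, so the hyperedge would have to be two of them at once.
For the pairs `(vᵢ, v₃)` the hyperedge is one of the two at `vᵢ`, which puts the other low-degree
vertex among `x, y`; it then lies in three hyperedges of the configuration.

A Berge-K4 created by adding `f` with `v₁, v₂` in its core has three hyperedges at each of them;
since only two can be old, `f` is the one assigned to the pair `v₁v₂`, and the other five hyperedges
make `(v₁, v₂)` good in the original hypergraph.
-/

theorem List.nodup_five_iff {α : Type*} {a b c d e : α} :
    [a, b, c, d, e].Nodup ↔
      (a ≠ b ∧ a ≠ c ∧ a ≠ d ∧ a ≠ e) ∧ (b ≠ c ∧ b ≠ d ∧ b ≠ e) ∧ (c ≠ d ∧ c ≠ e) ∧ d ≠ e := by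
  simp [List.nodup_cons, not_or]

namespace IsBergeK4Core

theorem swap₁₂ {α : Type*} {E : Finset (Finset α)} {a b c d : α}
    (h : IsBergeK4Core E a b c d) : IsBergeK4Core E b a c d := by
  obtain ⟨hab, hac, had, hbc, hbd, hcd, fab, fac, fad, fbc, fbd, fcd, h₁, h₂, h₃, h₄, h₅, h₆,
    hnd, m⟩ := h
  refine ⟨hab.symm, hbc, hbd, hac, had, hcd, fab, fbc, fbd, fac, fad, fcd,
    h₁, h₄, h₅, h₂, h₃, h₆, ?_, by tauto⟩
  simp only [List.nodup_cons, List.mem_cons, List.not_mem_nil, not_or] at hnd ⊢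
  grind

theorem swap₂₃ {α : Type*} {E : Finset (Finset α)} {a b c d : α}
    (h : IsBergeK4Core E a b c d) : IsBergeK4Core E a c b d := by
  obtain ⟨hab, hac, had, hbc, hbd, hcd, fab, fac, fad, fbc, fbd, fcd, h₁, h₂, h₃, h₄, h₅, h₆,
    hnd, m⟩ := h
  refine ⟨hac, hab, had, hbc.symm, hcd, hbd, fac, fab, fad, fbc, fcd, fbd,
    h₂, h₁, h₃, h₄, h₆, h₅, ?_, by tauto⟩
  simp only [List.nodup_cons, List.mem_cons, List.not_mem_nil, not_or] at hnd ⊢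
  grind

theorem swap₃₄ {α : Type*} {E : Finset (Finset α)} {a b c d : α}
    (h : IsBergeK4Core E a b c d) : IsBergeK4Core E a b d c := by
  obtain ⟨hab, hac, had, hbc, hbd, hcd, fab, fac, fad, fbc, fbd, fcd, h₁, h₂, h₃, h₄, h₅, h₆,
    hnd, m⟩ := h
  refine ⟨hab, had, hac, hbd, hbc, hcd.symm, fab, fad, fac, fbd, fbc, fcd,
    h₁, h₃, h₂, h₅, h₄, h₆, ?_, by tauto⟩
  simp only [List.nodup_cons, List.mem_cons, List.not_mem_nil, not_or] at hnd ⊢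
  grind

end IsBergeK4Core

theorem GoodPair.mono {α : Type*} {E F : Finset (Finset α)} {u v : α} (hEF : E ⊆ F)
    (h : GoodPair E u v) : GoodPair F u v := by
  obtain ⟨x, y, huv, hux, huy, hvx, hvy, hxy, eux, euy, evx, evy, exy, h₁, h₂, h₃, h₄, h₅,
    rest⟩ := h
  exact ⟨x, y, huv, hux, huy, hvx, hvy, hxy, eux, euy, evx, evy, exy,
    hEF h₁, hEF h₂, hEF h₃, hEF h₄, hEF h₅, rest⟩

variable {E : Finset (Finset V)} {f g₁ g₂ g₃ : Finset V} {u v w a b c d : V}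

theorem two_lt_hdeg (h₁ : g₁ ∈ E) (h₂ : g₂ ∈ E) (h₃ : g₃ ∈ E)
    (h₁₂ : g₁ ≠ g₂) (h₁₃ : g₁ ≠ g₃) (h₂₃ : g₂ ≠ g₃) (m₁ : v ∈ g₁) (m₂ : v ∈ g₂) (m₃ : v ∈ g₃) :
    2 < hdeg E v :=
  Finset.two_lt_card_iff.mpr
    ⟨g₁, g₂, g₃, Finset.mem_filter.mpr ⟨h₁, m₁⟩, Finset.mem_filter.mpr ⟨h₂, m₂⟩,
      Finset.mem_filter.mpr ⟨h₃, m₃⟩, h₁₂, h₁₃, h₂₃⟩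

theorem eq_or_eq_of_hdeg_le_two (hv : hdeg E v ≤ 2) (h : f ∈ E) (h₁ : g₁ ∈ E) (h₂ : g₂ ∈ E)
    (h₁₂ : g₁ ≠ g₂) (m : v ∈ f) (m₁ : v ∈ g₁) (m₂ : v ∈ g₂) : f = g₁ ∨ f = g₂ := by
  by_contra! hne
  have := two_lt_hdeg h h₁ h₂ hne.1 hne.2 h₁₂ m m₁ m₂
  omega

theorem eq_or_eq_or_eq_of_hdeg_le_two (hv : hdeg E v ≤ 2) (h₁ : g₁ ∈ insert f E)
    (h₂ : g₂ ∈ insert f E) (h₃ : g₃ ∈ insert f E) (h₁₂ : g₁ ≠ g₂) (h₁₃ : g₁ ≠ g₃) (h₂₃ : g₂ ≠ g₃)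
    (m₁ : v ∈ g₁) (m₂ : v ∈ g₂) (m₃ : v ∈ g₃) : f = g₁ ∨ f = g₂ ∨ f = g₃ := by
  by_contra! hne
  have old : ∀ g ∈ insert f E, f ≠ g → g ∈ E := fun g hg hfg =>
    (Finset.mem_insert.mp hg).resolve_left hfg.symm
  have := two_lt_hdeg (old _ h₁ hne.1) (old _ h₂ hne.2.1) (old _ h₃ hne.2.2) h₁₂ h₁₃ h₂₃ m₁ m₂ m₃
  omega

namespace IsBergeK4Core

theorem exists_of_mem (h : IsBergeK4Core E a b c d) (hu : u ∈ ({a, b, c, d} : Finset V))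
    (hv : v ∈ ({a, b, c, d} : Finset V)) (huv : u ≠ v) : ∃ x y, IsBergeK4Core E u v x y := by
  simp only [Finset.mem_insert, Finset.mem_singleton] at hu hv
  rcases hu with rfl | rfl | rfl | rfl <;> rcases hv with rfl | rfl | rfl | rfl
  all_goals first
    | exact absurd rfl huv
    | exact ⟨_, _, h⟩
    | exact ⟨_, _, h.swap₂₃⟩
    | exact ⟨_, _, h.swap₃₄.swap₂₃⟩
    | exact ⟨_, _, h.swap₁₂⟩
    | exact ⟨_, _, h.swap₁₂.swap₂₃⟩
    | exact ⟨_, _, h.swap₁₂.swap₃₄.swap₂₃⟩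
    | exact ⟨_, _, h.swap₂₃.swap₁₂⟩
    | exact ⟨_, _, h.swap₂₃.swap₁₂.swap₂₃⟩
    | exact ⟨_, _, h.swap₂₃.swap₁₂.swap₃₄.swap₂₃⟩
    | exact ⟨_, _, h.swap₃₄.swap₂₃.swap₁₂⟩
    | exact ⟨_, _, h.swap₃₄.swap₂₃.swap₁₂.swap₂₃⟩
    | exact ⟨_, _, h.swap₃₄.swap₂₃.swap₁₂.swap₃₄.swap₂₃⟩

theorem exists_goodPair_erase (h : IsBergeK4Core E a b c d) :
    ∃ g ∈ E, a ∈ g ∧ b ∈ g ∧ GoodPair (E.erase g) a b := by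
  obtain ⟨hab, hac, had, hbc, hbd, hcd, fab, fac, fad, fbc, fbd, fcd, h₁, h₂, h₃, h₄, h₅, h₆,
    hnd, ma₁, mb₁, ma₂, mc₂, ma₃, md₃, mb₄, mc₄, mb₅, md₅, mc₆, md₆⟩ := h
  obtain ⟨hfab, hnd⟩ := List.nodup_cons.mp hnd
  simp only [List.mem_cons, List.not_mem_nil, or_false, not_or] at hfab
  obtain ⟨n₂, n₃, n₄, n₅, n₆⟩ := hfab
  exact ⟨fab, h₁, ma₁, mb₁, c, d, hab, hac, had, hbc, hbd, hcd, fac, fad, fbc, fbd, fcd,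
    Finset.mem_erase.mpr ⟨Ne.symm n₂, h₂⟩, Finset.mem_erase.mpr ⟨Ne.symm n₃, h₃⟩,
    Finset.mem_erase.mpr ⟨Ne.symm n₄, h₄⟩, Finset.mem_erase.mpr ⟨Ne.symm n₅, h₅⟩,
    Finset.mem_erase.mpr ⟨Ne.symm n₆, h₆⟩, hnd, ma₂, mc₂, ma₃, md₃, mb₄, mc₄, mb₅, md₅, mc₆, md₆⟩

end IsBergeK4Core

theorem not_goodPair_of_mem_of_hdeg_le_two (he : f ∈ E) (huf : u ∈ f) (hvf : v ∈ f)
    (hu : hdeg E u ≤ 2) (hv : hdeg E v ≤ 2) : ¬ GoodPair E u v := by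
  rintro ⟨x, y, -, -, -, -, -, -, eux, euy, evx, evy, _, h₁, h₂, h₃, h₄, -, hnd,
    mu₁, -, mu₂, -, mv₃, -, mv₄, -, -, -⟩
  obtain ⟨⟨n₁₂, n₁₃, n₁₄, -⟩, ⟨n₂₃, n₂₄, -⟩, ⟨n₃₄, -⟩, -⟩ := List.nodup_five_iff.mp hnd
  rcases eq_or_eq_of_hdeg_le_two hu he h₁ h₂ n₁₂ huf mu₁ mu₂ with rfl | rfl <;>
    rcases eq_or_eq_of_hdeg_le_two hv he h₃ h₄ n₃₄ hvf mv₃ mv₄ with rfl | rfl <;>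
    contradiction

theorem not_goodPair_of_triple_mem (he : ({u, w, v} : Finset V) ∈ E) (hu : hdeg E u ≤ 2)
    (hw : hdeg E w ≤ 2) : ¬ GoodPair E u v := by
  rintro ⟨x, y, -, hux, huy, hvx, hvy, -, eux, euy, evx, evy, exy, h₁, h₂, h₃, h₄, h₅, hnd,
    mu₁, mx₁, mu₂, my₂, -, mx₃, -, my₄, mx₅, my₅⟩
  obtain ⟨⟨n₁₂, n₁₃, -, n₁₅⟩, ⟨-, n₂₄, n₂₅⟩, ⟨-, n₃₅⟩, n₄₅⟩ := List.nodup_five_iff.mp hnd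
  have eq_w : ∀ z ∈ ({u, w, v} : Finset V), u ≠ z → v ≠ z → z = w := by
    simp only [Finset.mem_insert, Finset.mem_singleton]
    grind
  rcases eq_or_eq_of_hdeg_le_two hu he h₁ h₂ n₁₂ (by simp) mu₁ mu₂ with he₁ | he₂
  · obtain rfl := eq_w x (he₁ ▸ mx₁) hux hvx
    have := two_lt_hdeg h₁ h₃ h₅ n₁₃ n₁₅ n₃₅ mx₁ mx₃ mx₅
    omega
  · obtain rfl := eq_w y (he₂ ▸ my₂) huy hvy
    have := two_lt_hdeg h₂ h₄ h₅ n₂₄ n₂₅ n₄₅ my₂ my₄ my₅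
    omega

theorem goodPair_of_isBergeK4Core_insert (hu : hdeg E u ≤ 2) (hv : hdeg E v ≤ 2)
    (h : IsBergeK4Core (insert f E) u v a b) : GoodPair E u v := by
  obtain ⟨g, hg, hug, hvg, hgood⟩ := h.exists_goodPair_erase
  obtain ⟨x, y, -, -, -, -, -, -, eux, euy, evx, evy, _, h₁, h₂, h₃, h₄, -, hnd,
    mu₁, -, mu₂, -, mv₃, -, mv₄, -, -, -⟩ := id hgood
  obtain ⟨⟨n₁₂, n₁₃, n₁₄, -⟩, ⟨n₂₃, n₂₄, -⟩, ⟨n₃₄, -⟩, -⟩ := List.nodup_five_iff.mp hnd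
  obtain ⟨ng₁, h₁⟩ := Finset.mem_erase.mp h₁
  obtain ⟨ng₂, h₂⟩ := Finset.mem_erase.mp h₂
  obtain ⟨ng₃, h₃⟩ := Finset.mem_erase.mp h₃
  obtain ⟨ng₄, h₄⟩ := Finset.mem_erase.mp h₄
  have hfu := eq_or_eq_or_eq_of_hdeg_le_two hu hg h₁ h₂ ng₁.symm ng₂.symm n₁₂ hug mu₁ mu₂
  have hfv := eq_or_eq_or_eq_of_hdeg_le_two hv hg h₃ h₄ ng₃.symm ng₄.symm n₃₄ hvg mv₃ mv₄
  have hfg : f = g := by grind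
  exact hgood.mono (hfg ▸ Finset.erase_insert_subset f E)

theorem stmt_3_general (E : Finset (Finset V))
    (v1 v2 v3 : V) (h12 : v1 ≠ v2)
    (he : ({v1, v2, v3} : Finset V) ∈ E)
    (hd1 : hdeg E v1 ≤ 2) (hd2 : hdeg E v2 ≤ 2) :
    (∀ f : Finset V, f.card = 3 →
      ∀ a b c d : V, IsBergeK4Core (insert f E) a b c d →
        ¬ (v1 ∈ ({a, b, c, d} : Finset V) ∧ v2 ∈ ({a, b, c, d} : Finset V))) ∧
    ¬ GoodPair E v1 v2 ∧ ¬ GoodPair E v1 v3 ∧ ¬ GoodPair E v2 v3 := by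
  have not_good₁₂ : ¬ GoodPair E v1 v2 :=
    not_goodPair_of_mem_of_hdeg_le_two he (by simp) (by simp) hd1 hd2
  refine ⟨fun f _ a b c d hcore ⟨hv1, hv2⟩ => ?_, not_good₁₂,
    not_goodPair_of_triple_mem he hd1 hd2,
    not_goodPair_of_triple_mem (by rwa [Finset.insert_comm]) hd2 hd1⟩
  obtain ⟨x, y, hcore⟩ := hcore.exists_of_mem hv1 hv2 h12
  exact not_good₁₂ (goodPair_of_isBergeK4Core_insert hd1 hd2 hcore)

theorem stmt_3 (E : Finset (Finset V)) (h3 : Is3Uniform E) (hfree : ¬ IsBergeK4 E)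
    (v1 v2 v3 : V) (h12 : v1 ≠ v2) (h13 : v1 ≠ v3) (h23 : v2 ≠ v3)
    (he : ({v1, v2, v3} : Finset V) ∈ E)
    (hd1 : hdeg E v1 ≤ 2) (hd2 : hdeg E v2 ≤ 2) :
    (∀ f : Finset V, f.card = 3 →
      ∀ a b c d : V, IsBergeK4Core (insert f E) a b c d →
        ¬ (v1 ∈ ({a, b, c, d} : Finset V) ∧ v2 ∈ ({a, b, c, d} : Finset V))) ∧
    ¬ GoodPair E v1 v2 ∧ ¬ GoodPair E v1 v3 ∧ ¬ GoodPair E v2 v3 :=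
  stmt_3_general E v1 v2 v3 h12 he hd1 hd2
end

section
/- Let H be a 3-uniform hypergraph and let T be the hypergraph on four new vertices a1, a2 glued onto two existing vertices u, v of H, consisting of the two hyperedges {a1,a2,u} and {a1,a2,v}. If H is Berge-K4-free, then the hypergraph H' obtained from H by adding the two new vertices a1,a2 and the two hyperedges {a1,a2,u}, {a1,a2,v} is also Berge-K4-free. -/
/-! Every core vertex of a Berge-K4 lies in three of its hyperedges, so each of its hyperedges
contains two distinct vertices of degree at least 3. In `H'` the vertices `a1, a2` have degree 2,
and each new hyperedge has only one vertex besides them; hence a Berge-K4 of `H'` uses only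
hyperedges of `H`. -/

variable {V : Type*} [DecidableEq V]

theorem three_le_hdeg_of_mem {F : Finset (Finset V)} {w : V} {f g h : Finset V}
    (hf : f ∈ F) (hg : g ∈ F) (hh : h ∈ F) (hfg : f ≠ g) (hfh : f ≠ h) (hgh : g ≠ h)
    (hwf : w ∈ f) (hwg : w ∈ g) (hwh : w ∈ h) : 3 ≤ hdeg F w := by
  calc 3 = ({f, g, h} : Finset (Finset V)).card :=
        (Finset.card_eq_three.2 ⟨f, g, h, hfg, hfh, hgh, rfl⟩).symm
    _ ≤ hdeg F w := Finset.card_le_card <| by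
      simp only [Finset.insert_subset_iff, Finset.singleton_subset_iff, Finset.mem_filter]
      exact ⟨⟨hf, hwf⟩, ⟨hg, hwg⟩, ⟨hh, hwh⟩⟩

theorem hdeg_insert_insert_le_two {E : Finset (Finset V)} {w : V} (hw : ∀ e ∈ E, w ∉ e)
    (s t : Finset V) : hdeg (insert s (insert t E)) w ≤ 2 := by
  calc hdeg (insert s (insert t E)) w ≤ ({s, t} : Finset (Finset V)).card :=
        Finset.card_le_card fun e he => by
          simp only [Finset.mem_filter, Finset.mem_insert] at he
          obtain ⟨rfl | rfl | he, hwe⟩ := he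
          · simp
          · simp
          · exact absurd hwe (hw e he)
    _ ≤ 2 := Finset.card_le_two

theorem IsBergeK4.of_heavy_edges_mem {E F : Finset (Finset V)} (hF : IsBergeK4 F)
    (hE : ∀ f ∈ F, ∀ x ∈ f, ∀ y ∈ f, x ≠ y → 3 ≤ hdeg F x → 3 ≤ hdeg F y → f ∈ E) :
    IsBergeK4 E := by
  obtain ⟨a, b, c, d, hab, hac, had, hbc, hbd, hcd, fab, fac, fad, fbc, fbd, fcd,
    hfab, hfac, hfad, hfbc, hfbd, hfcd, hnodup, hafab, hbfab, hafac, hcfac, hafad, hdfad,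
    hbfbc, hcfbc, hbfbd, hdfbd, hcfcd, hdfcd⟩ := hF
  have hne := hnodup
  simp only [List.nodup_cons, List.mem_cons, List.not_mem_nil, or_false, not_or,
    List.nodup_nil, not_false_eq_true, and_true] at hne
  obtain ⟨⟨hab_ac, hab_ad, hab_bc, hab_bd, -⟩, ⟨hac_ad, hac_bc, -, hac_cd⟩,
    ⟨-, had_bd, had_cd⟩, ⟨hbc_bd, hbc_cd⟩, hbd_cd⟩ := hne
  have ha := three_le_hdeg_of_mem hfab hfac hfad hab_ac hab_ad hac_ad hafab hafac hafad
  have hb := three_le_hdeg_of_mem hfab hfbc hfbd hab_bc hab_bd hbc_bd hbfab hbfbc hbfbd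
  have hc := three_le_hdeg_of_mem hfac hfbc hfcd hac_bc hac_cd hbc_cd hcfac hcfbc hcfcd
  have hd := three_le_hdeg_of_mem hfad hfbd hfcd had_bd had_cd hbd_cd hdfad hdfbd hdfcd
  exact ⟨a, b, c, d, hab, hac, had, hbc, hbd, hcd, fab, fac, fad, fbc, fbd, fcd,
    hE _ hfab _ hafab _ hbfab hab ha hb, hE _ hfac _ hafac _ hcfac hac ha hc,
    hE _ hfad _ hafad _ hdfad had ha hd, hE _ hfbc _ hbfbc _ hcfbc hbc hb hc,
    hE _ hfbd _ hbfbd _ hdfbd hbd hb hd, hE _ hfcd _ hcfcd _ hdfcd hcd hc hd,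
    hnodup, hafab, hbfab, hafac, hcfac, hafad, hdfad, hbfbc, hcfbc, hbfbd, hdfbd, hcfcd, hdfcd⟩

theorem stmt_5_general (E : Finset (Finset V))
    (a1 a2 u v : V)
    (hnew : ∀ e ∈ E, a1 ∉ e ∧ a2 ∉ e)
    (hfree : ¬ IsBergeK4 E) :
    ¬ IsBergeK4 (insert ({a1, a2, u} : Finset V) (insert ({a1, a2, v} : Finset V) E)) := by
  refine fun hK => hfree (hK.of_heavy_edges_mem ?_)
  intro f hf x hx y hy hxy hdx hdy
  have hlight : ∀ w, 3 ≤ hdeg (insert {a1, a2, u} (insert {a1, a2, v} E)) w →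
      w ≠ a1 ∧ w ≠ a2 := by
    intro w hw
    have h1 := hdeg_insert_insert_le_two (fun e he => (hnew e he).1) {a1, a2, u} {a1, a2, v}
    have h2 := hdeg_insert_insert_le_two (fun e he => (hnew e he).2) {a1, a2, u} {a1, a2, v}
    constructor <;> rintro rfl <;> omega
  obtain ⟨hx1, hx2⟩ := hlight x hdx
  obtain ⟨hy1, hy2⟩ := hlight y hdy
  have hf_old : ∀ w, f ≠ {a1, a2, w} := by
    rintro w rfl
    simp only [Finset.mem_insert, Finset.mem_singleton] at hx hy
    exact hxy (((hx.resolve_left hx1).resolve_left hx2).trans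
      ((hy.resolve_left hy1).resolve_left hy2).symm)
  simpa only [Finset.mem_insert, hf_old, false_or] using hf

theorem stmt_5 (E : Finset (Finset V)) (h3 : Is3Uniform E)
    (a1 a2 u v : V) (ha : a1 ≠ a2) (huv : u ≠ v)
    (ha1 : a1 ≠ u ∧ a1 ≠ v) (ha2 : a2 ≠ u ∧ a2 ≠ v)
    (hnew : ∀ e ∈ E, a1 ∉ e ∧ a2 ∉ e)
    (hfree : ¬ IsBergeK4 E) :
    ¬ IsBergeK4 (insert ({a1, a2, u} : Finset V) (insert ({a1, a2, v} : Finset V) E)) :=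
  stmt_5_general E a1 a2 u v hnew hfree
end

section
/- The 3-uniform hypergraph H on vertex set {x1,x2,x3,x4,a1,a2} with hyperedges {x1x2x3, x1x3x4, x1x3a1, x1x2x4, x1x4a2, x2a1a2} is Berge-K4-saturated. -/
/-!
Freeness: a core vertex of a Berge-K4 lies in three of its hyperedges, so the core consists of
vertices of degree at least 3, i.e. of `x1, x2, x3, x4`. Since `H` has only six hyperedges, a
Berge-K4 uses all of them, so `x2 a1 a2` would contain two core vertices; but `x2` is its only
vertex of degree at least 3.

Saturation: a non-hyperedge containing a good pair completes a Berge-K4 with that pair, and every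
3-set that is not a hyperedge contains one of six explicit good pairs.
-/

variable {V : Type*} [DecidableEq V]

/-- The 6-vertex hypergraph of Construction 2 (vertices x1,x2,x3,x4,a1,a2
are 0,1,2,3,4,5). -/
def baseEven : Finset (Finset (Fin 6)) :=
  {{0, 1, 2}, {0, 2, 3}, {0, 2, 4}, {0, 1, 3}, {0, 3, 5}, {1, 4, 5}}

variable {E : Finset (Finset V)}

theorem three_le_hdeg_of_nodup {v : V} {l : List (Finset V)} (hl : l.Nodup)
    (hlen : l.length = 3) (hmem : ∀ f ∈ l, f ∈ E ∧ v ∈ f) : 3 ≤ hdeg E v := by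
  calc 3 = l.toFinset.card := by rw [List.toFinset_card_of_nodup hl, hlen]
    _ ≤ hdeg E v := Finset.card_le_card fun f hf =>
        Finset.mem_filter.2 (hmem f (List.mem_toFinset.1 hf))

namespace IsBergeK4Core

variable {a b c d : V}

theorem three_le_hdeg (h : IsBergeK4Core E a b c d) :
    ∀ v ∈ ({a, b, c, d} : Finset V), 3 ≤ hdeg E v := by
  obtain ⟨-, -, -, -, -, -, fab, fac, fad, fbc, fbd, fcd,
    m1, m2, m3, m4, m5, m6, hnd, p1, p2, p3, p4, p5, p6, p7, p8, p9, p10, p11, p12⟩ := h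
  simp only [List.nodup_cons, List.mem_cons, List.not_mem_nil, or_false, not_or,
    List.nodup_nil] at hnd
  obtain ⟨⟨n1, n2, n3, n4, n5⟩, ⟨n6, n7, n8, n9⟩, ⟨n10, n11, n12⟩, ⟨n13, n14⟩, n15, -⟩ := hnd
  intro v hv
  simp only [Finset.mem_insert, Finset.mem_singleton] at hv
  rcases hv with rfl | rfl | rfl | rfl
  · exact three_le_hdeg_of_nodup (l := [fab, fac, fad]) (by simp [*]) rfl (by simp [*])
  · exact three_le_hdeg_of_nodup (l := [fab, fbc, fbd]) (by simp [*]) rfl (by simp [*])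
  · exact three_le_hdeg_of_nodup (l := [fac, fbc, fcd]) (by simp [*]) rfl (by simp [*])
  · exact three_le_hdeg_of_nodup (l := [fad, fbd, fcd]) (by simp [*]) rfl (by simp [*])

/-- With at most six hyperedges, a Berge-K4 uses every hyperedge. -/
theorem exists_ne_mem_of_card_le_six (h : IsBergeK4Core E a b c d) (hE : E.card ≤ 6)
    {e : Finset V} (he : e ∈ E) :
    ∃ u ∈ ({a, b, c, d} : Finset V), ∃ w ∈ ({a, b, c, d} : Finset V), u ≠ w ∧ u ∈ e ∧ w ∈ e := by
  obtain ⟨hab, hac, had, hbc, hbd, hcd, fab, fac, fad, fbc, fbd, fcd,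
    m1, m2, m3, m4, m5, m6, hnd, p1, p2, p3, p4, p5, p6, p7, p8, p9, p10, p11, p12⟩ := h
  have hsub : [fab, fac, fad, fbc, fbd, fcd].toFinset ⊆ E := by
    intro f hf
    simp only [List.mem_toFinset, List.mem_cons, List.not_mem_nil, or_false] at hf
    rcases hf with rfl | rfl | rfl | rfl | rfl | rfl <;> assumption
  have hall := Finset.eq_of_subset_of_card_le hsub
    (by rw [List.toFinset_card_of_nodup hnd]; exact hE)
  rw [← hall, List.mem_toFinset] at he
  simp only [List.mem_cons, List.not_mem_nil, or_false] at he
  rcases he with rfl | rfl | rfl | rfl | rfl | rfl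
  · exact ⟨a, by simp, b, by simp, hab, p1, p2⟩
  · exact ⟨a, by simp, c, by simp, hac, p3, p4⟩
  · exact ⟨a, by simp, d, by simp, had, p5, p6⟩
  · exact ⟨b, by simp, c, by simp, hbc, p7, p8⟩
  · exact ⟨b, by simp, d, by simp, hbd, p9, p10⟩
  · exact ⟨c, by simp, d, by simp, hcd, p11, p12⟩

end IsBergeK4Core

theorem GoodPair.isBergeK4_insert {u v : V} {e : Finset V} (h : GoodPair E u v) (hu : u ∈ e)
    (hv : v ∈ e) (he : e ∉ E) : IsBergeK4 (insert e E) := by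
  obtain ⟨x, y, huv, hux, huy, hvx, hvy, hxy, eux, euy, evx, evy, exy,
    m1, m2, m3, m4, m5, hnd, p1, p2, p3, p4, p5, p6, p7, p8, p9, p10⟩ := h
  refine ⟨u, v, x, y, huv, hux, huy, hvx, hvy, hxy, e, eux, euy, evx, evy, exy,
    Finset.mem_insert_self e E, Finset.mem_insert_of_mem m1, Finset.mem_insert_of_mem m2,
    Finset.mem_insert_of_mem m3, Finset.mem_insert_of_mem m4, Finset.mem_insert_of_mem m5,
    List.nodup_cons.2 ⟨fun hmem => he ?_, hnd⟩, hu, hv, p1, p2, p3, p4, p5, p6, p7, p8, p9, p10⟩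
  simp only [List.mem_cons, List.not_mem_nil, or_false] at hmem
  rcases hmem with rfl | rfl | rfl | rfl | rfl <;> assumption

theorem baseEven_is3Uniform : Is3Uniform baseEven := by
  unfold Is3Uniform
  decide

theorem baseEven_not_isBergeK4 : ¬ IsBergeK4 baseEven := by
  have eq_x2_of_three_le_hdeg :
      ∀ v ∈ ({1, 4, 5} : Finset (Fin 6)), 3 ≤ hdeg baseEven v → v = 1 := by
    decide
  rintro ⟨a, b, c, d, h⟩
  obtain ⟨u, hu, w, hw, huw, hue, hwe⟩ :=
    h.exists_ne_mem_of_card_le_six (by decide) (e := {1, 4, 5}) (by decide)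
  exact huw ((eq_x2_of_three_le_hdeg u hue (h.three_le_hdeg u hu)).trans
    (eq_x2_of_three_le_hdeg w hwe (h.three_le_hdeg w hw)).symm)

theorem baseEven_exists_goodPair (e : Finset (Fin 6)) (hc : e.card = 3) (he : e ∉ baseEven) :
    ∃ u ∈ e, ∃ v ∈ e, GoodPair baseEven u v := by
  have hcover : {0, 1} ⊆ e ∨ {0, 4} ⊆ e ∨ {1, 2} ⊆ e ∨ {1, 3} ⊆ e ∨ {2, 5} ⊆ e ∨ {3, 4} ⊆ e := by
    revert e
    decide
  simp only [Finset.insert_subset_iff, Finset.singleton_subset_iff] at hcover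
  rcases hcover with ⟨hu, hv⟩ | ⟨hu, hv⟩ | ⟨hu, hv⟩ | ⟨hu, hv⟩ | ⟨hu, hv⟩ | ⟨hu, hv⟩
  · refine ⟨_, hu, _, hv, 2, 3, ?_, ?_, ?_, ?_, ?_, ?_,
      {0, 2, 4}, {0, 3, 5}, {0, 1, 2}, {0, 1, 3}, {0, 2, 3}, ?_⟩ <;> decide
  · refine ⟨_, hu, _, hv, 1, 2, ?_, ?_, ?_, ?_, ?_, ?_,
      {0, 1, 3}, {0, 2, 3}, {1, 4, 5}, {0, 2, 4}, {0, 1, 2}, ?_⟩ <;> decide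
  · refine ⟨_, hu, _, hv, 0, 3, ?_, ?_, ?_, ?_, ?_, ?_,
      {0, 1, 2}, {0, 1, 3}, {0, 2, 4}, {0, 2, 3}, {0, 3, 5}, ?_⟩ <;> decide
  · refine ⟨_, hu, _, hv, 0, 2, ?_, ?_, ?_, ?_, ?_, ?_,
      {0, 1, 3}, {0, 1, 2}, {0, 3, 5}, {0, 2, 3}, {0, 2, 4}, ?_⟩ <;> decide
  · refine ⟨_, hu, _, hv, 0, 1, ?_, ?_, ?_, ?_, ?_, ?_,
      {0, 2, 3}, {0, 1, 2}, {0, 3, 5}, {1, 4, 5}, {0, 1, 3}, ?_⟩ <;> decide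
  · refine ⟨_, hu, _, hv, 0, 1, ?_, ?_, ?_, ?_, ?_, ?_,
      {0, 2, 3}, {0, 1, 3}, {0, 2, 4}, {1, 4, 5}, {0, 1, 2}, ?_⟩ <;> decide

theorem stmt_9 : IsSaturated baseEven := by
  refine ⟨baseEven_is3Uniform, baseEven_not_isBergeK4, fun e hc he => ?_⟩
  obtain ⟨u, hu, v, hv, huv⟩ := baseEven_exists_goodPair e hc he
  exact huv.isBergeK4_insert hu hv he
end

section
/- Let H be a Berge-K4-saturated 3-uniform hypergraph on n vertices with minimum degree at least 2, and define X = {v : d_H(v) ≥ 3}, A = {v ∉ X : every hyperedge containing v intersects X}, and B = V(H) \ (X ∪ A). If H is Berge-K4-saturated and every vertex outside X has degree exactly 2, then B = ∅ (every degree-2 vertex has all its hyperedges meeting a vertex of degree ≥ 3). -/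
/-!
A vertex `z` of a hyperedge `e` all of whose vertices have degree at most two is never one end of
a pair `zq` that a single new hyperedge would turn into a Berge-K4: of the two hyperedges at `z`
required by such a pair one would be `e`, and the next core vertex, lying in `e`, would need a
third hyperedge. Since the new hyperedge of a Berge-K4 created by saturation serves a pair of its
own vertices, saturation forces `{w, w', u} ∈ E` for all `w ≠ w'` in `e` and `u ∉ e`. A second
hyperedge at `v ∈ e` supplies such a `u`, and then `v` lies in three hyperedges.
-/

variable {V : Type*} [DecidableEq V]

omit [DecidableEq V] in
theorem GoodPair.symm {E : Finset (Finset V)} {u v : V} (h : GoodPair E u v) :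
    GoodPair E v u := by
  obtain ⟨x, y, huv, hux, huy, hvx, hvy, hxy, eux, euy, evx, evy, exy,
    h1, h2, h3, h4, h5, hnd, m1, m2, m3, m4, m5, m6, m7, m8, m9, m10⟩ := h
  refine ⟨x, y, huv.symm, hvx, hvy, hux, huy, hxy, evx, evy, eux, euy, exy,
    h3, h4, h1, h2, h5, ?_, m5, m6, m7, m8, m1, m2, m3, m4, m9, m10⟩
  simp only [List.nodup_cons, List.mem_cons, List.not_mem_nil, or_false, not_or,
    List.nodup_nil, not_false_eq_true, and_true] at hnd ⊢
  tauto

theorem exists_goodPair_of_isBergeK4_insert {E : Finset (Finset V)} {t : Finset V}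
    (hfree : ¬ IsBergeK4 E) (hK4 : IsBergeK4 (insert t E)) :
    ∃ p ∈ t, ∃ q ∈ t, GoodPair E p q := by
  obtain ⟨a, b, c, d, hab, hac, had, hbc, hbd, hcd, fab, fac, fad, fbc, fbd, fcd,
    h1, h2, h3, h4, h5, h6, hnd, ma1, mb1, ma2, mc1, ma3, md1, mb2, mc2, mb3, md2,
    mc3, md3⟩ := hK4
  simp only [List.nodup_cons, List.mem_cons, List.not_mem_nil, or_false, not_or,
    List.nodup_nil, not_false_eq_true, and_true] at hnd
  simp only [Finset.mem_insert] at h1 h2 h3 h4 h5 h6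
  rcases h1 with rfl | h1
  · exact ⟨a, ma1, b, mb1, c, d, hab, hac, had, hbc, hbd, hcd, fac, fad, fbc, fbd, fcd,
      by grind⟩
  rcases h2 with rfl | h2
  · exact ⟨a, ma2, c, mc1, b, d, hac, hab, had, hbc.symm, hcd, hbd, fab, fad, fbc, fcd, fbd,
      by grind⟩
  rcases h3 with rfl | h3
  · exact ⟨a, ma3, d, md1, b, c, had, hab, hac, hbd.symm, hcd.symm, hbc,
      fab, fac, fbd, fcd, fbc, by grind⟩
  rcases h4 with rfl | h4
  · exact ⟨b, mb2, c, mc2, a, d, hbc, hab.symm, hbd, hac.symm, hcd, had, fab, fbd, fac, fcd, fad,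
      by grind⟩
  rcases h5 with rfl | h5
  · exact ⟨b, mb3, d, md2, a, c, hbd, hab.symm, hbc, had.symm, hcd.symm, hac,
      fab, fbc, fad, fcd, fac, by grind⟩
  rcases h6 with rfl | h6
  · exact ⟨c, mc3, d, md3, a, b, hcd, hac.symm, hbc.symm, had.symm, hbd.symm, hab,
      fac, fbc, fad, fbd, fab, by grind⟩
  exact (hfree ⟨a, b, c, d, hab, hac, had, hbc, hbd, hcd, fab, fac, fad, fbc, fbd, fcd,
    h1, h2, h3, h4, h5, h6, by simp_all⟩).elim

theorem three_le_hdeg {E : Finset (Finset V)} {v : V} {f g h : Finset V}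
    (hf : f ∈ E) (hg : g ∈ E) (hh : h ∈ E) (hvf : v ∈ f) (hvg : v ∈ g) (hvh : v ∈ h)
    (hfg : f ≠ g) (hfh : f ≠ h) (hgh : g ≠ h) : 3 ≤ hdeg E v := by
  calc 3 = ({f, g, h} : Finset (Finset V)).card := (Finset.card_eq_three.mpr
          ⟨f, g, h, hfg, hfh, hgh, rfl⟩).symm
    _ ≤ hdeg E v := Finset.card_le_card <| by
          simp [Finset.insert_subset_iff, hf, hg, hh, hvf, hvg, hvh]

theorem not_goodPair_of_hdeg_le_two {E : Finset (Finset V)} {e : Finset V} {z q : V}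
    (he : e ∈ E) (hz : z ∈ e) (hlow : ∀ w ∈ e, hdeg E w ≤ 2) : ¬ GoodPair E z q := by
  rintro ⟨x, y, -, -, -, -, -, -, ezx, ezy, eqx, eqy, exy,
    h1, h2, h3, h4, h5, hnd, mz1, mx1, mz2, my2, -, mx3, -, my4, mx5, my5⟩
  simp only [List.nodup_cons, List.mem_cons, List.not_mem_nil, or_false, not_or,
    List.nodup_nil, not_false_eq_true, and_true] at hnd
  -- As `hdeg E z ≤ 2`, one of `ezx`, `ezy` is `e`; its other core vertex then lies in `e` and in
  -- two further hyperedges.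
  have low : ∀ w ∈ e, 3 ≤ hdeg E w → False := fun w hw h3 => by have := hlow w hw; omega
  by_cases hzx : ezx = e
  · subst hzx
    exact low x mx1 (three_le_hdeg he h3 h5 mx1 mx3 mx5 (by grind) (by grind) (by grind))
  by_cases hzy : ezy = e
  · subst hzy
    exact low y my2 (three_le_hdeg he h4 h5 my2 my4 my5 (by grind) (by grind) (by grind))
  exact low z hz (three_le_hdeg he h1 h2 hz mz1 mz2 (Ne.symm hzx) (Ne.symm hzy) (by grind))

theorem IsSaturated.mem_of_hdeg_le_two [Fintype V] {E : Finset (Finset V)}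
    (hsat : IsSaturated E) {e : Finset V} (he : e ∈ E) (hlow : ∀ w ∈ e, hdeg E w ≤ 2)
    {w w' u : V} (hw : w ∈ e) (hw' : w' ∈ e) (hww' : w ≠ w') (hu : u ∉ e) :
    {w, w', u} ∈ E := by
  by_contra ht
  have hcard : ({w, w', u} : Finset V).card = 3 :=
    Finset.card_eq_three.mpr ⟨w, w', u, hww', by grind, by grind, rfl⟩
  obtain ⟨p, hp, q, hq, hpq⟩ :=
    exists_goodPair_of_isBergeK4_insert hsat.2.1 (hsat.2.2 _ hcard ht)
  have hne : p ≠ q := by obtain ⟨-, -, h, -⟩ := hpq; exact h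
  simp only [Finset.mem_insert, Finset.mem_singleton] at hp hq
  rcases hp with rfl | rfl | rfl
  · exact not_goodPair_of_hdeg_le_two he hw hlow hpq
  · exact not_goodPair_of_hdeg_le_two he hw' hlow hpq
  · rcases hq with rfl | rfl | rfl
    · exact not_goodPair_of_hdeg_le_two he hw hlow hpq.symm
    · exact not_goodPair_of_hdeg_le_two he hw' hlow hpq.symm
    · exact (hne rfl).elim

theorem IsSaturated.exists_three_le_hdeg [Fintype V] {E : Finset (Finset V)}
    (hsat : IsSaturated E) {e : Finset V} (he : e ∈ E) {v : V} (hv : v ∈ e)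
    (hv2 : 2 ≤ hdeg E v) : ∃ w ∈ e, 3 ≤ hdeg E w := by
  by_contra! h3
  have hlow : ∀ w ∈ e, hdeg E w ≤ 2 := fun w hw => Nat.le_of_lt_succ (h3 w hw)
  obtain ⟨f, hf, hfe⟩ := Finset.exists_mem_ne hv2 e
  rw [Finset.mem_filter] at hf
  obtain ⟨u, huf, hue⟩ : ∃ u ∈ f, u ∉ e := Finset.not_subset.mp fun hsub =>
    hfe (Finset.eq_of_subset_of_card_le hsub (by rw [hsat.1 e he, hsat.1 f hf.1]))
  obtain ⟨v₁, v₂, h12, hev⟩ := Finset.card_eq_two.mp <| by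
    rw [Finset.card_erase_of_mem hv, hsat.1 e he]
  have hv₁ : v₁ ∈ e.erase v := by simp [hev]
  have hv₂ : v₂ ∈ e.erase v := by simp [hev]
  rw [Finset.mem_erase] at hv₁ hv₂
  have ht₁ := hsat.mem_of_hdeg_le_two he hlow hv hv₁.2 (Ne.symm hv₁.1) hue
  have ht₂ := hsat.mem_of_hdeg_le_two he hlow hv hv₂.2 (Ne.symm hv₂.1) hue
  have ht₁₂ : ({v, v₁, u} : Finset V) ≠ {v, v₂, u} := fun h => by
    have : v₁ ∈ ({v, v₂, u} : Finset V) := h ▸ by simp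
    simp only [Finset.mem_insert, Finset.mem_singleton] at this
    grind
  have := three_le_hdeg he ht₁ ht₂ hv (by simp) (by simp) (by grind) (by grind) ht₁₂
  have := hlow v hv
  omega

open scoped Classical in
theorem stmt_13_general (n : ℕ) (E : Finset (Finset (Fin n)))
    (hsat : IsSaturated E) (hmin : ∀ v : Fin n, 2 ≤ hdeg E v)
    (X A B : Finset (Fin n))
    (hX : X = Finset.univ.filter fun v => 3 ≤ hdeg E v)
    (hA : A = (Finset.univ \ X).filter fun v => ∀ e ∈ E, v ∈ e → ∃ w ∈ e, w ∈ X)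
    (hB : B = Finset.univ \ (X ∪ A)) :
    B = ∅ := by
  rw [Finset.eq_empty_iff_forall_notMem]
  intro v hv
  simp only [hB, hA, hX, Finset.mem_sdiff, Finset.mem_union, Finset.mem_filter,
    Finset.mem_univ, true_and, not_or] at hv
  exact hv.2 ⟨hv.1, fun e he hve => hsat.exists_three_le_hdeg he hve (hmin v)⟩

open scoped Classical in
theorem stmt_13 (n : ℕ) (E : Finset (Finset (Fin n)))
    (hsat : IsSaturated E) (hmin : ∀ v : Fin n, 2 ≤ hdeg E v)
    (X A B : Finset (Fin n))
    (hX : X = Finset.univ.filter fun v => 3 ≤ hdeg E v)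
    (hA : A = (Finset.univ \ X).filter fun v => ∀ e ∈ E, v ∈ e → ∃ w ∈ e, w ∈ X)
    (hB : B = Finset.univ \ (X ∪ A))
    (hdeg2 : ∀ v : Fin n, v ∉ X → hdeg E v = 2) :
    B = ∅ :=
  stmt_13_general n E hsat hmin X A B hX hA hB
end
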